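/- arXiv:1910.05845 — 2 statements merged into one kernel-verified Lean document; each statement's English description precedes it below -/
import Mathlib

section
/- For t < 3, the tail probability in Lemma A.1 decays polynomially with exponent exceeding one: choosing h = t/(2 N^{1/2} α(1−α)) in the Chernoff bound yields P( S_N > Nα + (2/t) N^{1/2} log L ) ≤ exp{ −(1 − t/4) (log L)/(α(1−α)) + o(1) } = O(L^{−r}) as L → ∞ with R = o(L), where r = (1 − t/4)/(α(1−α)) > 1. -/
open MeasureTheory ProbabilityTheory Filter Set

noncomputable section

/-- The σ-field generated by the variables of the sequence with time indices `≤ k`. -/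
def sigPast {Ω : Type*} [MeasurableSpace Ω] (Y : ℤ → Ω → ℝ) (k : ℤ) : MeasurableSpace Ω :=
  ⨆ i ∈ Set.Iic k, MeasurableSpace.comap (Y i) inferInstance

/-- The σ-field generated by the variables of the sequence with time indices `≥ k`. -/
def sigFuture {Ω : Type*} [MeasurableSpace Ω] (Y : ℤ → Ω → ℝ) (k : ℤ) : MeasurableSpace Ω :=
  ⨆ i ∈ Set.Ici k, MeasurableSpace.comap (Y i) inferInstance

/-- The φ-mixing condition: `|P(E₂ ∣ E₁) − P(E₂)| ≤ φ(n)` for `E₁` in the past up to time `k`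
with `P(E₁) > 0` and `E₂` in the future from time `k + n` on. -/
def PhiMixing {Ω : Type*} [MeasurableSpace Ω] (μ : Measure Ω) (Y : ℤ → Ω → ℝ)
    (φ : ℕ → ℝ) : Prop :=
  ∀ (k : ℤ) (n : ℕ), 1 ≤ n →
    ∀ E₁, MeasurableSet[sigPast Y k] E₁ →
      ∀ E₂, MeasurableSet[sigFuture Y (k + n)] E₂ →
        0 < μ E₁ →
          |(μ (E₁ ∩ E₂)).toReal / (μ E₁).toReal - (μ E₂).toReal| ≤ φ n

/-- Conditions on the mixing coefficients: `1 ≥ φ(1) ≥ φ(2) ≥ ⋯ ≥ 0`, `φ(n) → 0`, and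
`∑ₙ e^{tn} φ(n) < ∞` for the given `t > 0`. -/
def MixingCoef (φ : ℕ → ℝ) (t : ℝ) : Prop :=
  (∀ n, 0 ≤ φ n) ∧ (∀ n, φ n ≤ 1) ∧ (∀ n, φ (n + 1) ≤ φ n) ∧
    Filter.Tendsto φ Filter.atTop (nhds 0) ∧ 0 < t ∧
      Summable (fun n : ℕ => Real.exp (t * n) * φ n)

/-- Strict stationarity of a doubly infinite sequence of real random variables. -/
def Stationary {Ω : Type*} [MeasurableSpace Ω] (μ : Measure Ω) (Y : ℤ → Ω → ℝ) : Prop :=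
  ∀ k : ℤ, Measure.map (fun ω (i : ℤ) => Y (i + k) ω) μ = Measure.map (fun ω (i : ℤ) => Y i ω) μ

/-- Total pooled sample size `N = R · L`. -/
def NN (R : ℕ → ℕ) (L : ℕ) : ℕ := R L * L


/-- The pooled sum `S_N = ∑_{j=1}^R ∑_{i=1}^L Y_{ji}`. -/
def SNsum {Ω : Type*} (Y : ℕ → ℤ → Ω → ℝ) (R : ℕ → ℕ) (L : ℕ) (ω : Ω) : ℝ :=
  ∑ j ∈ Finset.range (R L), ∑ i ∈ Finset.range L, Y j ((i : ℤ) + 1) ω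

/-!
Chernoff bound, with the moment generating function of a row controlled by blocking. Split the
indices `1, …, L` of a row into the residue classes modulo `g ≈ log L / t`. By Hölder's inequality
the row's moment generating function is at most the geometric mean of those of the classes, and
within a class the variables are `g` apart, so φ-mixing bounds every joint probability
`P(Y_{i₁} = ⋯ = Y_{iₖ} = 1)` by `(α + φ g)^k`. Hence
`log E e^{h S_j} ≤ (L / g) log (1 + (e^{g h} - 1)(α + φ g))`, and the rows are independent.
Expanding the logarithm to third order at `h = t / (2 √N α(1-α))` turns the Chernoff exponent into
`-log L / (α(1-α)) + t log L / (8 α(1-α)) + O(1)`: the error comes from `g ≤ log L / t + 1`,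
`g² h → 0` and `√N φ g ≤ √N K e^{-t g} ≤ K` (using `R ≤ L`), and is absorbed by a second
`t log L / (8 α(1-α))` once `L` is large.
-/

open Finset Real
open scoped ENNReal

lemma exp_sub_one_le_two_mul {x : ℝ} (hx0 : 0 ≤ x) (hx : x ≤ 1) : exp x - 1 ≤ 2 * x := by
  have := abs_exp_sub_one_le (x := x) (by rwa [abs_of_nonneg hx0])
  rwa [abs_of_nonneg (sub_nonneg.2 (one_le_exp hx0)), abs_of_nonneg hx0] at this

/-- Third-order bound on the cumulant generating function of a Bernoulli(`a`) variable. -/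
lemma log_one_add_exp_sub_one_mul_le {a x : ℝ} (ha0 : 0 ≤ a) (ha1 : a ≤ 1) (hx0 : 0 ≤ x)
    (hx : x ≤ 1 / 4) :
    log (1 + (exp x - 1) * a) ≤ a * x + a * (1 - a) * x ^ 2 / 2 + 17 * x ^ 3 := by
  have hxc : x ≤ exp x - 1 := by linarith [add_one_le_exp x]
  have hc3 : exp x - 1 ≤ x + x ^ 2 / 2 + 2 / 9 * x ^ 3 := by
    have := exp_bound' hx0 (by linarith) (n := 3) (by norm_num)
    norm_num [Finset.sum_range_succ, Nat.factorial] at this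
    linarith
  set u := (exp x - 1) * a
  have hu0 : 0 ≤ u := mul_nonneg (hx0.trans hxc) ha0
  have hu2 : u ≤ 2 * x := (mul_le_of_le_one_right (hx0.trans hxc) ha1).trans
    (exp_sub_one_le_two_mul hx0 (by linarith))
  -- second-order Taylor expansion of `log (1 + u)`, with remainder `u³ / (1 - u) ≤ 2 u³`
  have hlog : log (1 + u) ≤ u - u ^ 2 / 2 + 2 * u ^ 3 := by
    have hu1 : |-u| < 1 := by rw [abs_neg, abs_of_nonneg hu0]; linarith
    have h : |-u + u ^ 2 / 2 + log (1 + u)| ≤ u ^ 3 / (1 - u) := by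
      simpa [Finset.sum_range_succ, abs_of_nonneg hu0, sub_eq_add_neg, one_add_one_eq_two] using
        abs_log_sub_add_sum_range_le hu1 2
    have hrem : u ^ 3 / (1 - u) ≤ 2 * u ^ 3 := by
      rw [div_le_iff₀ (by linarith)]; nlinarith [pow_nonneg hu0 3]
    linarith [(abs_le.1 h).2]
  have h1 : u ≤ a * x + a * x ^ 2 / 2 + 2 / 9 * x ^ 3 := by
    nlinarith [mul_le_mul_of_nonneg_right hc3 ha0, pow_nonneg hx0 3]
  have h2 : (a * x) ^ 2 ≤ u ^ 2 :=
    pow_le_pow_left₀ (mul_nonneg ha0 hx0) (by nlinarith) 2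
  have h3 : u ^ 3 ≤ (2 * x) ^ 3 := pow_le_pow_left₀ hu0 hu2 3
  nlinarith

lemma log_one_add_mul_add_le {c a q : ℝ} (hc : 0 ≤ c) (ha : 0 ≤ a) (hq : 0 ≤ q) :
    log (1 + c * (a + q)) ≤ log (1 + c * a) + c * q := by
  have hca : 0 < 1 + c * a := by positivity
  calc log (1 + c * (a + q)) ≤ log ((1 + c * a) * exp (c * q)) := by
        gcongr
        nlinarith [add_one_le_exp (c * q), mul_nonneg hc ha, mul_nonneg hc hq]
    _ = log (1 + c * a) + c * q := by rw [log_mul hca.ne' (exp_pos _).ne', log_exp]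

lemma log_one_add_exp_sub_one_mul_add_le {a q x : ℝ} (ha0 : 0 ≤ a) (ha1 : a ≤ 1) (hq : 0 ≤ q)
    (hx0 : 0 ≤ x) (hx : x ≤ 1 / 4) :
    log (1 + (exp x - 1) * (a + q))
      ≤ a * x + a * (1 - a) * x ^ 2 / 2 + 17 * x ^ 3 + 2 * x * q := by
  have hc0 : 0 ≤ exp x - 1 := sub_nonneg.2 (one_le_exp hx0)
  have := mul_le_mul_of_nonneg_right (exp_sub_one_le_two_mul hx0 (by linarith)) hq
  linarith [log_one_add_mul_add_le hc0 ha0 hq, log_one_add_exp_sub_one_mul_le ha0 ha1 hx0 hx]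

lemma chernoff_exponent_le {α β t s g h ℓ q K : ℝ} (hα0 : 0 < α) (hα1 : α < 1)
    (hβ : β = α * (1 - α)) (ht : 0 < t) (hs : 0 < s) (hh : h = t / (2 * s * β))
    (hg : 1 ≤ g) (hgℓ : g ≤ ℓ / t + 1) (hgh : g ^ 2 * h ≤ 1 / 4) (hq : 0 ≤ q) (hsq : s * q ≤ K)
    (hℓ : t + 17 * t / (2 * β) + 8 * K ≤ ℓ) :
    -h * (s ^ 2 * α + 2 / t * s * ℓ) + s ^ 2 / g * log (1 + (exp (g * h) - 1) * (α + q))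
      ≤ -(1 - t / 4) * ℓ / β := by
  have hβ0 : 0 < β := hβ ▸ mul_pos hα0 (sub_pos.2 hα1)
  have hh0 : 0 < h := hh ▸ by positivity
  have hx : g * h ≤ 1 / 4 := by
    have : g * h * (g - 1) ≥ 0 := by
      have := zero_le_one.trans hg
      have := sub_nonneg.2 hg
      positivity
    nlinarith
  have hlogX := log_one_add_exp_sub_one_mul_add_le hα0.le hα1.le hq (by positivity) hx
  rw [← hβ] at hlogX
  have hbracket : g * t / 8 + 17 * (g ^ 2 * h) * t / (4 * β) + s * q ≤ ℓ / 4 := by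
    have hgt := mul_le_mul_of_nonneg_right hgℓ ht.le
    rw [add_mul, one_mul, div_mul_cancel₀ _ ht.ne'] at hgt
    have hgh' : 17 * (g ^ 2 * h) * t / (4 * β) ≤ 17 * (1 / 4) * t / (4 * β) := by gcongr
    have : 17 * (1 / 4) * t / (4 * β) = 17 * t / (2 * β) / 8 := by ring
    linarith
  calc -h * (s ^ 2 * α + 2 / t * s * ℓ) + s ^ 2 / g * log (1 + (exp (g * h) - 1) * (α + q))
      ≤ -h * (s ^ 2 * α + 2 / t * s * ℓ) + s ^ 2 / g
          * (α * (g * h) + β * (g * h) ^ 2 / 2 + 17 * (g * h) ^ 3 + 2 * (g * h) * q) := by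
        gcongr
    _ = -(ℓ / β) + t / β * (g * t / 8 + 17 * (g ^ 2 * h) * t / (4 * β) + s * q) := by
        have hg0 : g ≠ 0 := by positivity
        rw [hh]
        field_simp
        ring
    _ ≤ -(ℓ / β) + t / β * (ℓ / 4) := by gcongr
    _ = -(1 - t / 4) * ℓ / β := by ring

section Mixing

variable {Ω : Type*} [MeasurableSpace Ω] {μ : Measure Ω} {Z : ℤ → Ω → ℝ} {φ : ℕ → ℝ}

lemma comap_le_sigPast {i k : ℤ} (h : i ≤ k) :
    MeasurableSpace.comap (Z i) inferInstance ≤ sigPast Z k :=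
  le_iSup₂ (f := fun j (_ : j ∈ Iic k) => MeasurableSpace.comap (Z j) inferInstance) i h

lemma comap_le_sigFuture {i k : ℤ} (h : k ≤ i) :
    MeasurableSpace.comap (Z i) inferInstance ≤ sigFuture Z k :=
  le_iSup₂ (f := fun j (_ : j ∈ Ici k) => MeasurableSpace.comap (Z j) inferInstance) i h

variable [IsProbabilityMeasure μ]

lemma PhiMixing.nonneg (hmix : PhiMixing μ Z φ) {n : ℕ} (hn : 1 ≤ n) : 0 ≤ φ n := by
  simpa using hmix 0 n hn univ MeasurableSet.univ univ MeasurableSet.univ (by simp)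

lemma PhiMixing.measure_inter_le (hmix : PhiMixing μ Z φ) {k : ℤ} {n : ℕ} (hn : 1 ≤ n)
    {E₁ E₂ : Set Ω} (hE₁ : MeasurableSet[sigPast Z k] E₁)
    (hE₂ : MeasurableSet[sigFuture Z (k + n)] E₂) :
    μ (E₁ ∩ E₂) ≤ μ E₁ * ENNReal.ofReal (μ.real E₂ + φ n) := by
  rcases (zero_le : 0 ≤ μ E₁).eq_or_lt with h0 | hpos
  · simp [measure_mono_null inter_subset_left h0.symm, ← h0]
  have hq : 0 < (μ E₁).toReal := ENNReal.toReal_pos hpos.ne' (measure_ne_top μ E₁)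
  have hcond := (abs_le.1 (hmix k n hn E₁ hE₁ E₂ hE₂ hpos)).2
  rw [sub_le_iff_le_add', div_le_iff₀ hq] at hcond
  rw [← ENNReal.ofReal_toReal (measure_ne_top μ (E₁ ∩ E₂)),
    ← ENNReal.ofReal_toReal (measure_ne_top μ E₁), ← ENNReal.ofReal_mul hq.le, measureReal_def]
  exact ENNReal.ofReal_le_ofReal (by linarith)

lemma PhiMixing.measure_biInter_le_pow (hmix : PhiMixing μ Z φ) {p : ℝ}
    (hmarg : ∀ i, μ.real {ω | Z i ω = 1} ≤ p) {g : ℕ} (hg : 1 ≤ g) (u : Finset ℕ)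
    (hu : ∀ a ∈ u, ∀ b ∈ u, a < b → a + g ≤ b) :
    μ (⋂ i ∈ u, {ω | Z ((i : ℤ) + 1) ω = 1}) ≤ ENNReal.ofReal (p + φ g) ^ #u := by
  induction u using Finset.induction_on_max with
  | empty => simp
  | insert a u ha ih =>
    have hpast : MeasurableSet[sigPast Z (a + 1 - g)] (⋂ i ∈ u, {ω | Z ((i : ℤ) + 1) ω = 1}) :=
      @Finset.measurableSet_biInter _ _ (sigPast Z (a + 1 - g)) _ u fun i hi => by
        have := hu i (mem_insert_of_mem hi) a (mem_insert_self a u) (ha i hi)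
        exact comap_le_sigPast (by omega) _ ⟨{1}, measurableSet_singleton 1, rfl⟩
    have hfut : MeasurableSet[sigFuture Z (a + 1 - g + g)] {ω | Z ((a : ℤ) + 1) ω = 1} :=
      comap_le_sigFuture (by omega) _ ⟨{1}, measurableSet_singleton 1, rfl⟩
    rw [set_biInter_insert, inter_comm, card_insert_of_notMem fun h => (ha a h).false, pow_succ]
    calc μ ((⋂ i ∈ u, {ω | Z ((i : ℤ) + 1) ω = 1}) ∩ {ω | Z ((a : ℤ) + 1) ω = 1})
        ≤ μ (⋂ i ∈ u, {ω | Z ((i : ℤ) + 1) ω = 1})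
          * ENNReal.ofReal (μ.real {ω | Z ((a : ℤ) + 1) ω = 1} + φ g) :=
          hmix.measure_inter_le hg hpast (by simpa using hfut)
      _ ≤ ENNReal.ofReal (p + φ g) ^ #u * ENNReal.ofReal (p + φ g) := by
        gcongr
        · exact ih fun a' ha' b hb => hu a' (mem_insert_of_mem ha') b (mem_insert_of_mem hb)
        · exact hmarg _

end Mixing

section RowSum

variable {Ω : Type*} [MeasurableSpace Ω] {μ : Measure Ω}

lemma lintegral_prod_indicator_add_one_le {ι : Type*} (s : Finset ι) {A : ι → Set Ω}
    (hA : ∀ i, MeasurableSet (A i)) (C Q : ℝ≥0∞)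
    (hQ : ∀ u ⊆ s, μ (⋂ i ∈ u, A i) ≤ Q ^ #u) :
    ∫⁻ ω, ∏ i ∈ s, ((A i).indicator (fun _ => C) ω + 1) ∂μ ≤ (C * Q + 1) ^ #s := by
  have hexpand : ∀ ω, ∏ i ∈ s, ((A i).indicator (fun _ => C) ω + 1)
      = ∑ u ∈ s.powerset, (⋂ i ∈ u, A i).indicator (fun _ => C ^ #u) ω := fun ω => by
    classical
    simp [Finset.prod_add, prod_indicator_const_apply, Pi.pow_def]
  have hmeas : ∀ u : Finset ι, MeasurableSet (⋂ i ∈ u, A i) :=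
    fun u => u.measurableSet_biInter fun i _ => hA i
  simp_rw [hexpand]
  rw [lintegral_finsetSum _ fun u _ => measurable_const.indicator (hmeas u),
    ← sum_pow_mul_eq_add_pow]
  gcongr with u hu
  rw [lintegral_indicator_const (hmeas u), one_pow, mul_one, mul_pow]
  gcongr
  exact hQ u (mem_powerset.1 hu)

lemma lintegral_prod_rpow_le_prod_residue (F : ℕ → Ω → ℝ≥0∞) (hF : ∀ i, AEMeasurable (F i) μ)
    (L : ℕ) {g : ℕ} (hg : 0 < g) :
    ∫⁻ ω, ∏ i ∈ range L, F i ω ^ (g⁻¹ : ℝ) ∂μ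
      ≤ ∏ r ∈ range g, (∫⁻ ω, ∏ i ∈ range L with i % g = r, F i ω ∂μ) ^ (g⁻¹ : ℝ) := by
  have hmaps : ∀ i ∈ range L, i % g ∈ range g := fun i _ => mem_range.2 (Nat.mod_lt i hg)
  have hsum : ∑ _r ∈ range g, (g⁻¹ : ℝ) = 1 := by
    rw [sum_const, card_range, nsmul_eq_mul, mul_inv_cancel₀ (Nat.cast_pos.2 hg).ne']
  calc ∫⁻ ω, ∏ i ∈ range L, F i ω ^ (g⁻¹ : ℝ) ∂μ
      = ∫⁻ ω, ∏ r ∈ range g, (∏ i ∈ range L with i % g = r, F i ω) ^ (g⁻¹ : ℝ) ∂μ := by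
        congr 1 with ω
        rw [← prod_fiberwise_of_maps_to hmaps]
        exact prod_congr rfl fun _ _ => ENNReal.prod_rpow_of_nonneg (by positivity)
    _ ≤ _ := ENNReal.lintegral_prod_norm_pow_le (range g)
        (f := fun r ω => ∏ i ∈ range L with i % g = r, F i ω) (p := fun _ => (g⁻¹ : ℝ))
        (fun r _ => Finset.aemeasurable_fun_prod _ fun i _ => hF i) hsum fun _ _ => by positivity

lemma add_le_of_mod_eq_of_lt {a b g : ℕ} (hmod : a % g = b % g) (hab : a < b) : a + g ≤ b := by
  have := Nat.le_of_dvd (by omega) ((Nat.modEq_iff_dvd' hab.le).1 hmod)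
  omega

variable [IsProbabilityMeasure μ] {Z : ℤ → Ω → ℝ} {φ : ℕ → ℝ} {p : ℝ}

lemma PhiMixing.lintegral_exp_sum_range_le (hZ : ∀ i, Measurable (Z i))
    (hZ01 : ∀ i ω, Z i ω = 0 ∨ Z i ω = 1) (hmix : PhiMixing μ Z φ)
    (hmarg : ∀ i, μ.real {ω | Z i ω = 1} ≤ p) (L : ℕ) {g : ℕ} (hg : 1 ≤ g) {h : ℝ} (hh : 0 ≤ h) :
    ∫⁻ ω, ENNReal.ofReal (exp (h * ∑ i ∈ range L, Z ((i : ℤ) + 1) ω)) ∂μ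
      ≤ ((ENNReal.ofReal (exp (g * h) - 1) * ENNReal.ofReal (p + φ g) + 1) ^ L) ^ (g⁻¹ : ℝ) := by
  set c := exp (g * h) - 1
  have hc : 0 ≤ c := sub_nonneg.2 (one_le_exp (by positivity))
  set A : ℕ → Set Ω := fun i => {ω | Z ((i : ℤ) + 1) ω = 1}
  have hA : ∀ i, MeasurableSet (A i) := fun i => hZ _ (measurableSet_singleton 1)
  set F : ℕ → Ω → ℝ≥0∞ := fun i ω => (A i).indicator (fun _ => ENNReal.ofReal c) ω + 1
  -- on `{0,1}`-valued variables, `exp (g h Z) = 1 + (exp (g h) - 1) 1_{Z = 1}`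
  have hF : ∀ (i : ℕ) ω, ENNReal.ofReal (exp (h * Z ((i : ℤ) + 1) ω)) = F i ω ^ (g⁻¹ : ℝ) := by
    intro i ω
    rcases hZ01 ((i : ℤ) + 1) ω with h0 | h1
    · simp [F, A, h0]
    · have : ENNReal.ofReal c + 1 = ENNReal.ofReal (exp (g * h)) := by
        rw [← ENNReal.ofReal_one, ← ENNReal.ofReal_add hc zero_le_one]; simp [c]
      rw [show F i ω = ENNReal.ofReal c + 1 by simp [F, A, h1], this,
        ENNReal.ofReal_rpow_of_nonneg (exp_pos _).le (by positivity), ← exp_mul, h1]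
      field_simp
  have hclass : ∀ r, ∫⁻ ω, ∏ i ∈ range L with i % g = r, F i ω ∂μ
      ≤ (ENNReal.ofReal c * ENNReal.ofReal (p + φ g) + 1) ^ #{i ∈ range L | i % g = r} :=
    fun r => lintegral_prod_indicator_add_one_le _ hA _ _ fun u hu =>
      hmix.measure_biInter_le_pow hmarg hg u fun a ha b hb hab => add_le_of_mod_eq_of_lt
        ((mem_filter.1 (hu ha)).2.trans (mem_filter.1 (hu hb)).2.symm) hab
  calc _ = ∫⁻ ω, ∏ i ∈ range L, F i ω ^ (g⁻¹ : ℝ) ∂μ := by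
        simp_rw [mul_sum, exp_sum, ENNReal.ofReal_prod_of_nonneg fun _ _ => (exp_pos _).le, hF]
    _ ≤ _ := lintegral_prod_rpow_le_prod_residue F
        (fun i => (measurable_const.indicator (hA i)).add_const 1 |>.aemeasurable) L hg
    _ ≤ ∏ r ∈ range g, ((ENNReal.ofReal c * ENNReal.ofReal (p + φ g) + 1)
          ^ #{i ∈ range L | i % g = r}) ^ (g⁻¹ : ℝ) := by
        gcongr with r; exact hclass r
    _ = _ := by
        rw [ENNReal.prod_rpow_of_nonneg (by positivity), prod_pow_eq_pow_sum,
          ← card_eq_sum_card_fiberwise fun i hi => mem_range.2 (Nat.mod_lt i hg), card_range]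

theorem PhiMixing.mgf_sum_range_le (hZ : ∀ i, Measurable (Z i))
    (hZ01 : ∀ i ω, Z i ω = 0 ∨ Z i ω = 1) (hmix : PhiMixing μ Z φ)
    (hmarg : ∀ i, μ.real {ω | Z i ω = 1} ≤ p) (L : ℕ) {g : ℕ} (hg : 1 ≤ g) {h : ℝ} (hh : 0 ≤ h) :
    mgf (fun ω => ∑ i ∈ range L, Z ((i : ℤ) + 1) ω) μ h
      ≤ (1 + (exp (g * h) - 1) * (p + φ g)) ^ ((L : ℝ) / g) := by
  have hc : 0 ≤ exp (g * h) - 1 := sub_nonneg.2 (one_le_exp (by positivity))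
  have hq : 0 ≤ p + φ g := add_nonneg (measureReal_nonneg.trans (hmarg 0)) (hmix.nonneg hg)
  rw [mgf, integral_eq_lintegral_of_nonneg_ae (ae_of_all _ fun _ => (exp_pos _).le)
    (by fun_prop)]
  calc _ ≤ (((ENNReal.ofReal (exp (g * h) - 1) * ENNReal.ofReal (p + φ g) + 1) ^ L)
          ^ (g⁻¹ : ℝ)).toReal :=
        ENNReal.toReal_mono (by finiteness)
          (hmix.lintegral_exp_sum_range_le hZ hZ01 hmarg L hg hh)
    _ = _ := by
        rw [← ENNReal.toReal_rpow, ENNReal.toReal_pow, ENNReal.toReal_add (by finiteness)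
          (by finiteness), ENNReal.toReal_mul, ENNReal.toReal_ofReal hc, ENNReal.toReal_ofReal hq,
          ENNReal.toReal_one, ← rpow_natCast, ← rpow_mul (by positivity), add_comm, div_eq_mul_inv]

end RowSum

/-- The gap `g` of the blocking argument: observations `g` apart are nearly independent,
since `φ g ≤ K e^{-t g} ≤ K / L`. -/
def mixingGap (t : ℝ) (L : ℕ) : ℕ := max 1 ⌈log L / t⌉₊

lemma one_le_mixingGap (t : ℝ) (L : ℕ) : 1 ≤ mixingGap t L := le_max_left _ _

lemma log_div_le_mixingGap (t : ℝ) (L : ℕ) : log L / t ≤ mixingGap t L :=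
  (Nat.le_ceil _).trans (by exact_mod_cast le_max_right _ _)

lemma mixingGap_le {t : ℝ} (ht : 0 < t) {L : ℕ} (hL : 0 ≤ log L) :
    (mixingGap t L : ℝ) ≤ log L / t + 1 := by
  rw [mixingGap, Nat.cast_max, Nat.cast_one]
  exact max_le (by linarith [div_nonneg hL ht.le]) (Nat.ceil_lt_add_one (by positivity)).le

lemma mixingGap_sq_mul_le {t β s : ℝ} (ht : 0 < t) (hβ : 0 < β) {L : ℕ} (hs : √L ≤ s)
    (hℓ : t ≤ log L) (hsmall : log L ^ 2 / √L ≤ t * β / 8) :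
    (mixingGap t L : ℝ) ^ 2 * (t / (2 * s * β)) ≤ 1 / 4 := by
  have hL : 0 < √(L : ℝ) := sqrt_pos.2 (by
    by_contra! h; linarith [log_nonpos (Nat.cast_nonneg L) (h.trans zero_le_one)])
  have hg : (mixingGap t L : ℝ) ≤ 2 * log L / t := by
    have := mixingGap_le ht (ht.le.trans hℓ)
    rw [mul_div_assoc, two_mul]
    linarith [(one_le_div ht).2 hℓ]
  have hs0 : 0 < s := hL.trans_le hs
  calc (mixingGap t L : ℝ) ^ 2 * (t / (2 * s * β))
      ≤ (2 * log L / t) ^ 2 * (t / (2 * √L * β)) := by gcongr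
    _ = 2 / (t * β) * (log L ^ 2 / √L) := by field_simp
    _ ≤ 2 / (t * β) * (t * β / 8) := by gcongr
    _ = 1 / 4 := by field_simp; norm_num

lemma mul_mixingGap_le {φ : ℕ → ℝ} {t K : ℝ} (ht : 0 < t) (hK : 0 ≤ K)
    (hφ : ∀ n, φ n ≤ K * exp (-(t * n))) {L : ℕ} (hL : 0 < L) {s : ℝ} (hs0 : 0 ≤ s)
    (hs : s ≤ L) : s * φ (mixingGap t L) ≤ K := by
  have hL' : (0 : ℝ) < L := by exact_mod_cast hL
  have hφL : φ (mixingGap t L) ≤ K / L := by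
    calc φ (mixingGap t L) ≤ K * exp (-(t * mixingGap t L)) := hφ _
      _ ≤ K * exp (-log L) := by
          gcongr
          linarith [(div_le_iff₀' ht).1 (log_div_le_mixingGap t L)]
      _ = K / L := by rw [exp_neg, exp_log hL', div_eq_mul_inv]
  calc s * φ (mixingGap t L) ≤ s * (K / L) := mul_le_mul_of_nonneg_left hφL hs0
    _ ≤ L * (K / L) := by gcongr
    _ = K := by field_simp

lemma SNsum_le_NN {Ω : Type*} {Y : ℕ → ℤ → Ω → ℝ} {R : ℕ → ℕ}
    (h01 : ∀ j i ω, Y j i ω = 0 ∨ Y j i ω = 1) (L : ℕ) (ω : Ω) :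
    SNsum Y R L ω ≤ NN R L := by
  calc SNsum Y R L ω ≤ ∑ j ∈ range (R L), ∑ i ∈ range L, (1 : ℝ) :=
        sum_le_sum fun j _ => sum_le_sum fun i _ => by
          rcases h01 j ((i : ℤ) + 1) ω with h | h <;> simp [h]
    _ = NN R L := by simp [NN]

section Pooled

variable {Ω : Type*} [MeasurableSpace Ω] {μ : Measure Ω} [IsProbabilityMeasure μ]
  {Y : ℕ → ℤ → Ω → ℝ} {R : ℕ → ℕ} {φ : ℕ → ℝ} {α : ℝ}

lemma measureReal_lt_SNsum_le (hmeas : ∀ j i, Measurable (Y j i))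
    (h01 : ∀ j i ω, Y j i ω = 0 ∨ Y j i ω = 1) (hindep : iIndepFun (fun j ω (i : ℤ) => Y j i ω) μ)
    (hmix : ∀ j, PhiMixing μ (Y j) φ) (hmarg : ∀ j i, μ.real {ω | Y j i ω = 1} ≤ α) (L : ℕ)
    {g : ℕ} (hg : 1 ≤ g) {h : ℝ} (hh : 0 ≤ h) (a : ℝ) :
    μ.real {ω | a < SNsum Y R L ω}
      ≤ exp (-h * a) * (1 + (exp (g * h) - 1) * (α + φ g)) ^ ((NN R L : ℝ) / g) := by
  have hrow : ∀ j, Measurable fun ω => ∑ i ∈ range L, Y j ((i : ℤ) + 1) ω :=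
    fun j => Finset.measurable_fun_sum _ fun i _ => hmeas j _
  have hsum : SNsum Y R L = ∑ j ∈ range (R L), fun ω => ∑ i ∈ range L, Y j ((i : ℤ) + 1) ω := by
    ext ω; simp [SNsum]
  have hint : Integrable (fun ω => exp (h * SNsum Y R L ω)) μ := by
    refine .of_bound (by rw [hsum]; fun_prop) (exp (h * NN R L)) (ae_of_all _ fun ω => ?_)
    rw [norm_of_nonneg (exp_pos _).le]
    gcongr
    exact SNsum_le_NN h01 L ω
  have hX : 0 ≤ 1 + (exp (g * h) - 1) * (α + φ g) := by
    have := sub_nonneg.2 (one_le_exp (by positivity : 0 ≤ (g : ℝ) * h))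
    have := add_nonneg (measureReal_nonneg.trans (hmarg 0 0)) ((hmix 0).nonneg hg)
    positivity
  calc μ.real {ω | a < SNsum Y R L ω} ≤ μ.real {ω | a ≤ SNsum Y R L ω} :=
        measureReal_mono fun ω (hω : a < SNsum Y R L ω) => hω.le
    _ ≤ exp (-h * a) * mgf (SNsum Y R L) μ h := measure_ge_le_exp_mul_mgf a hh hint
    _ ≤ exp (-h * a) * ∏ _j ∈ range (R L), (1 + (exp (g * h) - 1) * (α + φ g)) ^ ((L : ℝ) / g) := by
        have hrows : iIndepFun (fun j ω => ∑ i ∈ range L, Y j ((i : ℤ) + 1) ω) μ :=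
          hindep.comp (fun _ f => ∑ i ∈ range L, f ((i : ℤ) + 1)) fun _ => by fun_prop
        rw [hsum, hrows.mgf_sum hrow]
        gcongr with j
        · exact fun _ _ => mgf_nonneg
        · exact (hmix j).mgf_sum_range_le (hmeas j) (h01 j) (hmarg j) L hg hh
    _ = _ := by
        rw [prod_const, card_range, ← rpow_natCast, ← rpow_mul hX, NN, Nat.cast_mul]
        ring_nf

lemma measureReal_tail_le_of_large (hmeas : ∀ j i, Measurable (Y j i))
    (h01 : ∀ j i ω, Y j i ω = 0 ∨ Y j i ω = 1) (hindep : iIndepFun (fun j ω (i : ℤ) => Y j i ω) μ)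
    (hmix : ∀ j, PhiMixing μ (Y j) φ) (hmarg : ∀ j i, μ.real {ω | Y j i ω = 1} ≤ α)
    (hα0 : 0 < α) (hα1 : α < 1) {t K : ℝ} (ht : 0 < t) (hK : 0 ≤ K)
    (hφK : ∀ n, φ n ≤ K * exp (-(t * n))) {L : ℕ} (hR1 : 1 ≤ R L) (hRL : (R L : ℝ) ≤ L)
    (hℓ : t + 17 * t / (2 * (α * (1 - α))) + 8 * K ≤ log L)
    (hsmall : log L ^ 2 / √L ≤ t * (α * (1 - α)) / 8) :
    μ.real {ω | (NN R L : ℝ) * α + (2 / t) * (NN R L : ℝ) ^ ((1 : ℝ) / 2) * log L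
        < SNsum Y R L ω} ≤ exp (-(1 - t / 4) * log L / (α * (1 - α))) := by
  set β := α * (1 - α) with hβ
  have hβ0 : 0 < β := mul_pos hα0 (sub_pos.2 hα1)
  have hℓt : t ≤ log L := by
    have : 0 ≤ 17 * t / (2 * β) := by positivity
    linarith
  set g := mixingGap t L
  set s := √(NN R L : ℝ)
  have hR1' : (1 : ℝ) ≤ R L := by exact_mod_cast hR1
  have hL : 0 < L := by exact_mod_cast zero_lt_one.trans_le (hR1'.trans hRL)
  have hs2 : s ^ 2 = NN R L := sq_sqrt (Nat.cast_nonneg _)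
  have hsL : √L ≤ s := sqrt_le_sqrt (by rw [NN, Nat.cast_mul]; nlinarith)
  have hs : s ≤ L := (sqrt_le_left (by positivity)).2 (by rw [NN, Nat.cast_mul]; nlinarith)
  have hs0 : 0 < s := (sqrt_pos.2 (by exact_mod_cast hL)).trans_le hsL
  have hφg : 0 ≤ φ g := (hmix 0).nonneg (one_le_mixingGap t L)
  set h := t / (2 * s * β) with hh
  have hX : 0 < 1 + (exp (g * h) - 1) * (α + φ g) := by
    have := sub_nonneg.2 (one_le_exp (by positivity : 0 ≤ (g : ℝ) * h))
    positivity
  rw [← sqrt_eq_rpow]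
  calc _ ≤ exp (-h * (NN R L * α + 2 / t * s * log L))
        * (1 + (exp (g * h) - 1) * (α + φ g)) ^ ((NN R L : ℝ) / g) :=
        measureReal_lt_SNsum_le hmeas h01 hindep hmix hmarg L (one_le_mixingGap t L)
          (by positivity) _
    _ = exp (-h * (s ^ 2 * α + 2 / t * s * log L)
        + s ^ 2 / g * log (1 + (exp (g * h) - 1) * (α + φ g))) := by
        rw [rpow_def_of_pos hX, ← exp_add, hs2]
        ring_nf
    _ ≤ _ := exp_le_exp.2 <| chernoff_exponent_le hα0 hα1 hβ ht hs0 hh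
        (by exact_mod_cast one_le_mixingGap t L) (mixingGap_le ht (ht.le.trans hℓt))
        (mixingGap_sq_mul_le ht hβ0 hsL hℓt hsmall) hφg
        (mul_mixingGap_le ht hK hφK hL hs0.le hs) hℓ

end Pooled

lemma Summable.exists_le_mul_exp_neg {φ : ℕ → ℝ} {t : ℝ}
    (h : Summable fun n : ℕ => exp (t * n) * φ n) :
    ∃ K, 0 ≤ K ∧ ∀ n : ℕ, φ n ≤ K * exp (-(t * n)) := by
  obtain ⟨K, hK⟩ := h.tendsto_atTop_zero.bddAbove_range
  refine ⟨max K 0, le_max_right _ _, fun n => ?_⟩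
  rw [exp_neg, ← div_eq_mul_inv, le_div_iff₀ (exp_pos _), mul_comm]
  exact (hK (mem_range_self n)).trans (le_max_left _ _)

lemma eventually_log_sq_div_sqrt_le {ε : ℝ} (hε : 0 < ε) :
    ∀ᶠ L : ℕ in atTop, log L ^ 2 / √L ≤ ε := by
  have h : Tendsto (fun x : ℝ => log x ^ 2 / √x) atTop (nhds 0) := by
    refine (isLittleO_log_rpow_rpow_atTop 2 one_half_pos).tendsto_div_nhds_zero.congr fun x => ?_
    rw [rpow_two, sqrt_eq_rpow]
  exact (h.comp tendsto_natCast_atTop_atTop).eventually (eventually_le_nhds hε)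

theorem lemma_A1_tail_probability_bound_general
    {Ω : Type*} [MeasurableSpace Ω] (μ : Measure Ω) [IsProbabilityMeasure μ]
    (Y : ℕ → ℤ → Ω → ℝ) (R : ℕ → ℕ) (φ : ℕ → ℝ) (t : ℝ) (α : ℝ)
    -- the `Y_{ji}` are measurable and {0,1}-valued
    (hmeas : ∀ j i, Measurable (Y j i))
    (h01 : ∀ j i ω, Y j i ω = 0 ∨ Y j i ω = 1)
    -- the rows (replications) are mutually independent …
    (hindep : iIndepFun (fun j ω (i : ℤ) => Y j i ω) μ)
    -- … of φ-mixing random variables, with coefficients satisfying (6)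
    (hmix : ∀ j, PhiMixing μ (Y j) φ)
    (hφ : MixingCoef φ t)
    -- common marginal distribution `P(Y_{ji} = 1) = α`
    (hmarg : ∀ j i, (μ {ω | Y j i ω = 1}).toReal = α)
    (hα : 0 < α) (hα1 : α < 1)
    -- `N = R·L` with `R = o(L)` as `L → ∞`
    (hR1 : ∀ L, 1 ≤ R L)
    (hRo : (fun L => (R L : ℝ)) =o[atTop] (fun L => (L : ℝ)))
    (ht3 : t < 3) :
    1 < (1 - t / 4) / (α * (1 - α)) ∧
    ∃ e : ℕ → ℝ, Tendsto e atTop (nhds 0) ∧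
      (∀ᶠ L : ℕ in atTop,
        (μ {ω | (NN R L : ℝ) * α + (2 / t) * (NN R L : ℝ) ^ ((1 : ℝ) / 2) * Real.log L <
            SNsum Y R L ω}).toReal ≤
          Real.exp (-(1 - t / 4) * Real.log L / (α * (1 - α)) + e L)) ∧
      ∃ C : ℝ, ∀ᶠ L : ℕ in atTop,
        (μ {ω | (NN R L : ℝ) * α + (2 / t) * (NN R L : ℝ) ^ ((1 : ℝ) / 2) * Real.log L <
            SNsum Y R L ω}).toReal ≤
          C * (L : ℝ) ^ (-((1 - t / 4) / (α * (1 - α)))) := by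
  obtain ⟨-, -, -, -, ht, hsum⟩ := hφ
  obtain ⟨K, hK, hφK⟩ := hsum.exists_le_mul_exp_neg
  have hβ : 0 < α * (1 - α) := mul_pos hα (sub_pos.2 hα1)
  have key : ∀ᶠ L : ℕ in atTop,
      (μ {ω | (NN R L : ℝ) * α + (2 / t) * (NN R L : ℝ) ^ ((1 : ℝ) / 2) * Real.log L <
        SNsum Y R L ω}).toReal ≤ exp (-(1 - t / 4) * log L / (α * (1 - α))) := by
    filter_upwards [hRo.bound one_pos, eventually_log_sq_div_sqrt_le
      (by positivity : 0 < t * (α * (1 - α)) / 8),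
      (tendsto_log_atTop.comp tendsto_natCast_atTop_atTop).eventually_ge_atTop
        (t + 17 * t / (2 * (α * (1 - α))) + 8 * K)] with L hRL hsmall hℓ
    exact measureReal_tail_le_of_large hmeas h01 hindep hmix (fun j i => (hmarg j i).le) hα hα1
      ht hK hφK (hR1 L) (by simpa using hRL) hℓ hsmall
  refine ⟨?_, fun _ => 0, tendsto_const_nhds, by simpa using key, 1, ?_⟩
  · rw [lt_div_iff₀ hβ]
    nlinarith [sq_nonneg (2 * α - 1)]
  · filter_upwards [key, eventually_gt_atTop 0] with L hL hL0
    have hpow : (L : ℝ) ^ (-((1 - t / 4) / (α * (1 - α))))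
        = exp (-(1 - t / 4) * log L / (α * (1 - α))) := by
      rw [rpow_def_of_pos (by positivity)]
      ring_nf
    rwa [one_mul, hpow]

/-- **Tail-probability bound in Lemma A.1.** For `t < 3`, the Chernoff bound with
`h = t/(2N^{1/2}α(1−α))` yields
`P(S_N > Nα + (2/t)N^{1/2} log L) ≤ exp{−(1 − t/4) log L/(α(1−α)) + o(1)} = O(L^{−r})`
as `L → ∞` with `R = o(L)`, where `r = (1 − t/4)/(α(1−α)) > 1`. -/
theorem lemma_A1_tail_probability_bound
    {Ω : Type*} [MeasurableSpace Ω] (μ : Measure Ω) [IsProbabilityMeasure μ]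
    (Y : ℕ → ℤ → Ω → ℝ) (R : ℕ → ℕ) (φ : ℕ → ℝ) (t : ℝ) (α : ℝ)
    -- the `Y_{ji}` are measurable and {0,1}-valued
    (hmeas : ∀ j i, Measurable (Y j i))
    (h01 : ∀ j i ω, Y j i ω = 0 ∨ Y j i ω = 1)
    -- the rows (replications) are mutually independent …
    (hindep : iIndepFun (fun j ω (i : ℤ) => Y j i ω) μ)
    -- … each row is a stationary sequence …
    (hstat : ∀ j, Stationary μ (Y j))
    -- … of φ-mixing random variables, with coefficients satisfying (6)
    (hmix : ∀ j, PhiMixing μ (Y j) φ)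
    (hφ : MixingCoef φ t)
    -- common marginal distribution `P(Y_{ji} = 1) = α`
    (hmarg : ∀ j i, (μ {ω | Y j i ω = 1}).toReal = α)
    (hα : 0 < α) (hα1 : α < 1)
    -- `N = R·L` with `R = o(L)` as `L → ∞`
    (hR1 : ∀ L, 1 ≤ R L)
    (hRo : (fun L => (R L : ℝ)) =o[atTop] (fun L => (L : ℝ)))
    (ht3 : t < 3) :
    1 < (1 - t / 4) / (α * (1 - α)) ∧
    ∃ e : ℕ → ℝ, Tendsto e atTop (nhds 0) ∧
      (∀ᶠ L : ℕ in atTop,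
        (μ {ω | (NN R L : ℝ) * α + (2 / t) * (NN R L : ℝ) ^ ((1 : ℝ) / 2) * Real.log L <
            SNsum Y R L ω}).toReal ≤
          Real.exp (-(1 - t / 4) * Real.log L / (α * (1 - α)) + e L)) ∧
      ∃ C : ℝ, ∀ᶠ L : ℕ in atTop,
        (μ {ω | (NN R L : ℝ) * α + (2 / t) * (NN R L : ℝ) ^ ((1 : ℝ) / 2) * Real.log L <
            SNsum Y R L ω}).toReal ≤
          C * (L : ℝ) ^ (-((1 - t / 4) / (α * (1 - α)))) :=
  lemma_A1_tail_probability_bound_general μ Y R φ t α hmeas h01 hindep hmix hφ hmarg hα hα1 hR1 hRo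
    ht3

end
end

section
/- Let {Y_i} be a stationary {0,1}-valued φ-mixing sequence with P(Y_i = 1) = α. Then for every λ > 0, every gap size n ≥ 1, and every M ≥ 0, the moment generating function of the sparse sum S^{(1)} = Y_1 + Y_{1+n} + Y_{1+2n} + ⋯ + Y_{1+Mn} satisfies E[ exp(λ S^{(1)}) ] ≤ { 1 + (α + φ(n)) (e^{λ} − 1) }^{M+1}. -/
open MeasureTheory ProbabilityTheory Filter Set

noncomputable section

/-! Write `c = e^λ - 1`. Since `Y_j ∈ {0,1}`, `exp (λ Y_j) = 1 + c Y_j`, so peeling off the last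
term of the sparse sum gives `E[f exp (λ Y_j)] = E[f] + c E[f 1_{Y_j = 1}]`, where `f = exp (λ S)`
for the shorter sum `S` is a nonnegative function of the past at distance at least `n` from `j`.
The φ-mixing condition bounds `μ (A ∩ {Y_j = 1}) ≤ (α + φ n) μ A` for past events `A`; comparing
the two measures on the past σ-field, this integrates to `E[f 1_{Y_j = 1}] ≤ (α + φ n) E[f]`, so
each term of the sum costs a factor `1 + (α + φ n) c`. -/

theorem integral_indicator_le_mul_integral_of_measureReal_inter_le {Ω : Type*}
    {m m₀ : MeasurableSpace Ω} {μ : Measure Ω} [IsFiniteMeasure μ] (hm : m ≤ m₀) {E : Set Ω}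
    (hE : MeasurableSet E) {C : ℝ} (hC : 0 ≤ C)
    (h : ∀ A, MeasurableSet[m] A → μ.real (A ∩ E) ≤ C * μ.real A)
    {f : Ω → ℝ} (hf : StronglyMeasurable[m] f) (hf0 : 0 ≤ f) (hfi : Integrable f μ) :
    ∫ ω, E.indicator f ω ∂μ ≤ C * ∫ ω, f ω ∂μ := by
  have hle : (μ.restrict E).trim hm ≤ ENNReal.ofReal C • μ.trim hm := by
    refine Measure.le_iff.2 fun A hA => ?_
    rw [trim_measurableSet_eq hm hA, Measure.smul_apply, trim_measurableSet_eq hm hA,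
      Measure.restrict_apply (hm A hA), smul_eq_mul, ← ofReal_measureReal, ← ofReal_measureReal,
      ← ENNReal.ofReal_mul hC]
    exact ENNReal.ofReal_le_ofReal (h A hA)
  calc ∫ ω, E.indicator f ω ∂μ = ∫ ω, f ω ∂(μ.restrict E).trim hm := by
        rw [integral_indicator hE, integral_trim hm hf]
    _ ≤ ∫ ω, f ω ∂(ENNReal.ofReal C • μ.trim hm) :=
        integral_mono_measure hle (ae_of_all _ hf0)
          ((hfi.trim hm hf).smul_measure ENNReal.ofReal_ne_top)
    _ = C * ∫ ω, f ω ∂μ := by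
        rw [integral_smul_measure, ← integral_trim hm hf, ENNReal.toReal_ofReal hC, smul_eq_mul]

theorem Real.exp_mul_of_eq_zero_or_eq_one {y : ℝ} (hy : y = 0 ∨ y = 1) (lam : ℝ) :
    Real.exp (lam * y) = 1 + (Real.exp lam - 1) * y := by
  rcases hy with rfl | rfl <;> simp

theorem integrable_exp_mul_sum_of_le_one {Ω ι : Type*} [MeasurableSpace Ω] {μ : Measure Ω}
    [IsFiniteMeasure μ] {X : ι → Ω → ℝ} (hmeas : ∀ i, Measurable (X i)) (hX : ∀ i ω, X i ω ≤ 1)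
    {lam : ℝ} (hlam : 0 ≤ lam) (s : Finset ι) :
    Integrable (fun ω => Real.exp (lam * ∑ i ∈ s, X i ω)) μ := by
  have hm : Measurable fun ω => Real.exp (lam * ∑ i ∈ s, X i ω) :=
    (measurable_const.mul (Finset.measurable_sum s fun i _ => hmeas i)).exp
  refine .of_bound hm.aestronglyMeasurable (Real.exp (lam * s.card)) (ae_of_all _ fun ω => ?_)
  rw [Real.norm_of_nonneg (Real.exp_pos _).le]
  refine Real.exp_le_exp.2 (mul_le_mul_of_nonneg_left ?_ hlam)
  simpa using Finset.sum_le_card_nsmul s (X · ω) 1 fun i _ => hX i ω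

section Sigma

variable {Ω : Type*} [MeasurableSpace Ω] {Y : ℤ → Ω → ℝ}

theorem sigPast_le (hmeas : ∀ i, Measurable (Y i)) (k : ℤ) : sigPast Y k ≤ ‹MeasurableSpace Ω› :=
  iSup₂_le fun i _ => (hmeas i).comap_le

theorem measurable_sigPast {i k : ℤ} (hik : i ≤ k) : Measurable[sigPast Y k] (Y i) :=
  Measurable.of_comap_le <|
    le_iSup₂ (f := fun i (_ : i ∈ Iic k) => MeasurableSpace.comap (Y i) inferInstance) i hik

theorem measurable_sigFuture {i k : ℤ} (hki : k ≤ i) : Measurable[sigFuture Y k] (Y i) :=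
  Measurable.of_comap_le <|
    le_iSup₂ (f := fun i (_ : i ∈ Ici k) => MeasurableSpace.comap (Y i) inferInstance) i hki

end Sigma

namespace PhiMixing

variable {Ω : Type*} [MeasurableSpace Ω] {μ : Measure Ω} {Y : ℤ → Ω → ℝ} {φ : ℕ → ℝ} {n : ℕ}

theorem nonneg_s13 [NeZero μ] (hmix : PhiMixing μ Y φ) (hn : 1 ≤ n) : 0 ≤ φ n :=
  (abs_nonneg _).trans <| hmix 0 n hn univ .univ univ .univ (NeZero.pos _)

theorem measureReal_inter_le [IsFiniteMeasure μ] (hmix : PhiMixing μ Y φ) (hn : 1 ≤ n) {k : ℤ}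
    {A E : Set Ω} (hA : MeasurableSet[sigPast Y k] A) (hE : MeasurableSet[sigFuture Y (k + n)] E) :
    μ.real (A ∩ E) ≤ (μ.real E + φ n) * μ.real A := by
  rcases eq_zero_or_pos (μ A) with hA0 | hA0
  · have hA0' : μ.real A = 0 := by rw [measureReal_def, hA0, ENNReal.toReal_zero]
    rw [measureReal_mono_null inter_subset_left hA0', hA0', mul_zero]
  · have hApos : 0 < μ.real A := ENNReal.toReal_pos hA0.ne' (measure_ne_top μ A)
    have h := (abs_le.1 (hmix k n hn A hA E hE hA0)).2
    rw [sub_le_iff_le_add'] at h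
    exact (div_le_iff₀ hApos).1 h

theorem integral_mul_le [IsFiniteMeasure μ] [NeZero μ] (hmix : PhiMixing μ Y φ)
    (hmeas : ∀ i, Measurable (Y i)) {j k : ℤ} (h01 : ∀ ω, Y j ω = 0 ∨ Y j ω = 1) (hn : 1 ≤ n)
    (hkj : k + n ≤ j)
    {f : Ω → ℝ} (hf : StronglyMeasurable[sigPast Y k] f) (hf0 : 0 ≤ f) (hfi : Integrable f μ) :
    ∫ ω, f ω * Y j ω ∂μ ≤ (μ.real {ω | Y j ω = 1} + φ n) * ∫ ω, f ω ∂μ := by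
  set E := {ω | Y j ω = 1}
  have hfE : (fun ω => f ω * Y j ω) = E.indicator f := by
    ext ω
    rcases h01 ω with h | h <;> simp [E, indicator, h]
  rw [hfE]
  exact integral_indicator_le_mul_integral_of_measureReal_inter_le (sigPast_le hmeas k)
    (hmeas j (measurableSet_singleton 1)) (add_nonneg measureReal_nonneg (hmix.nonneg_s13 hn))
    (fun A hA => hmix.measureReal_inter_le hn hA
      (measurable_sigFuture hkj (measurableSet_singleton 1)))
    hf hf0 hfi

theorem integral_exp_sum_progression_le [IsProbabilityMeasure μ] (hmix : PhiMixing μ Y φ)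
    (hmeas : ∀ i, Measurable (Y i)) (h01 : ∀ i ω, Y i ω = 0 ∨ Y i ω = 1) {α : ℝ}
    (hmarg : ∀ i, μ.real {ω | Y i ω = 1} = α) {lam : ℝ} (hlam : 0 ≤ lam) (hn : 1 ≤ n)
    (a : ℤ) (M : ℕ) :
    ∫ ω, Real.exp (lam * ∑ m ∈ Finset.range M, Y (a + (m : ℤ) * n) ω) ∂μ ≤
      (1 + (α + φ n) * (Real.exp lam - 1)) ^ M := by
  induction M with
  | zero => simp
  | succ M ih =>
    set c := Real.exp lam - 1
    set f := fun ω => Real.exp (lam * ∑ m ∈ Finset.range M, Y (a + (m : ℤ) * n) ω)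
    set j := a + (M : ℤ) * n
    have hc : 0 ≤ c := sub_nonneg.2 (Real.one_le_exp hlam)
    have hY1 : ∀ i ω, |Y i ω| ≤ 1 := fun i ω => by rcases h01 i ω with h | h <;> simp [h]
    have hfi : Integrable f μ := integrable_exp_mul_sum_of_le_one (fun _ => hmeas _)
      (fun _ ω => (le_abs_self _).trans (hY1 _ ω)) hlam _
    have hsplit : ∀ ω, Real.exp (lam * ∑ m ∈ Finset.range (M + 1), Y (a + (m : ℤ) * n) ω)
        = f ω + c * (f ω * Y j ω) := fun ω => by
      rw [Finset.sum_range_succ, mul_add, Real.exp_add,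
        Real.exp_mul_of_eq_zero_or_eq_one (h01 _ ω)]
      simp only [f, j, c]
      ring
    have hf : StronglyMeasurable[sigPast Y (j - n)] f :=
      (measurable_const.mul (Finset.measurable_sum _ fun m hm => measurable_sigPast (by
        have : (m : ℤ) + 1 ≤ M := by exact_mod_cast Finset.mem_range.1 hm
        nlinarith))).exp.stronglyMeasurable
    have hfYi : Integrable (fun ω => f ω * Y j ω) μ :=
      hfi.mul_bdd (hmeas j).aestronglyMeasurable (ae_of_all _ fun ω => hY1 j ω)
    have hB : 0 ≤ 1 + (α + φ n) * c := by
      have : 0 ≤ α := hmarg 0 ▸ measureReal_nonneg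
      have := hmix.nonneg_s13 hn
      positivity
    calc ∫ ω, Real.exp (lam * ∑ m ∈ Finset.range (M + 1), Y (a + (m : ℤ) * n) ω) ∂μ
        = ∫ ω, f ω ∂μ + c * ∫ ω, f ω * Y j ω ∂μ := by
          rw [integral_congr_ae (ae_of_all _ hsplit), integral_add hfi (hfYi.const_mul c),
            integral_const_mul]
      _ ≤ ∫ ω, f ω ∂μ + c * ((α + φ n) * ∫ ω, f ω ∂μ) := by
          gcongr
          rw [← hmarg j]
          exact hmix.integral_mul_le hmeas (h01 j) hn (sub_add_cancel j n).le hf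
            (fun ω => (Real.exp_pos _).le) hfi
      _ = (1 + (α + φ n) * c) * ∫ ω, f ω ∂μ := by ring
      _ ≤ (1 + (α + φ n) * c) * (1 + (α + φ n) * c) ^ M := by gcongr
      _ = (1 + (α + φ n) * c) ^ (M + 1) := (pow_succ' _ _).symm

end PhiMixing

theorem sparse_sum_mgf_bound_general
    {Ω : Type*} [MeasurableSpace Ω] (μ : Measure Ω) [IsProbabilityMeasure μ]
    (Y : ℤ → Ω → ℝ) (φ : ℕ → ℝ) (α : ℝ)
    -- the `Y_i` are measurable and {0,1}-valued
    (hmeas : ∀ i, Measurable (Y i))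
    (h01 : ∀ i ω, Y i ω = 0 ∨ Y i ω = 1)
    -- φ-mixing with coefficients `1 ≥ φ(1) ≥ φ(2) ≥ ⋯ ≥ 0`, `φ(n) → 0`
    (hmix : PhiMixing μ Y φ)
    -- common marginal distribution `P(Y_i = 1) = α`
    (hmarg : ∀ i, (μ {ω | Y i ω = 1}).toReal = α)
     :
    ∀ lam : ℝ, 0 < lam → ∀ n : ℕ, 1 ≤ n → ∀ M : ℕ,
      ∫ ω, Real.exp (lam * ∑ m ∈ Finset.range (M + 1), Y (1 + (m : ℤ) * (n : ℤ)) ω) ∂μ ≤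
        (1 + (α + φ n) * (Real.exp lam - 1)) ^ (M + 1) :=
  fun _ hlam _ hn M => hmix.integral_exp_sum_progression_le hmeas h01 hmarg hlam.le hn 1 (M + 1)

/-- **MGF bound for a sparse subsequence (inequality (20)).** For a stationary {0,1}-valued
φ-mixing sequence with `P(Y_i = 1) = α`: for every `λ > 0`, gap `n ≥ 1`, and `M ≥ 0`, the
sparse sum `S^{(1)} = Y_1 + Y_{1+n} + ⋯ + Y_{1+Mn}` satisfies
`E[exp(λ S^{(1)})] ≤ (1 + (α + φ(n))(e^λ − 1))^{M+1}`. -/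
theorem sparse_sum_mgf_bound
    {Ω : Type*} [MeasurableSpace Ω] (μ : Measure Ω) [IsProbabilityMeasure μ]
    (Y : ℤ → Ω → ℝ) (φ : ℕ → ℝ) (α : ℝ)
    -- the `Y_i` are measurable and {0,1}-valued
    (hmeas : ∀ i, Measurable (Y i))
    (h01 : ∀ i ω, Y i ω = 0 ∨ Y i ω = 1)
    -- stationarity
    (hstat : Stationary μ Y)
    -- φ-mixing with coefficients `1 ≥ φ(1) ≥ φ(2) ≥ ⋯ ≥ 0`, `φ(n) → 0`
    (hmix : PhiMixing μ Y φ)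
    (hφ0 : ∀ n, 0 ≤ φ n) (hφ1 : ∀ n, φ n ≤ 1) (hφmono : ∀ n, φ (n + 1) ≤ φ n)
    (hφlim : Tendsto φ atTop (nhds 0))
    -- common marginal distribution `P(Y_i = 1) = α`
    (hmarg : ∀ i, (μ {ω | Y i ω = 1}).toReal = α)
    (hα : 0 < α) (hα1 : α < 1)
     :
    ∀ lam : ℝ, 0 < lam → ∀ n : ℕ, 1 ≤ n → ∀ M : ℕ,
      ∫ ω, Real.exp (lam * ∑ m ∈ Finset.range (M + 1), Y (1 + (m : ℤ) * (n : ℤ)) ω) ∂μ ≤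
        (1 + (α + φ n) * (Real.exp lam - 1)) ^ (M + 1) :=
  sparse_sum_mgf_bound_general μ Y φ α hmeas h01 hmix hmarg
end
end
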